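/- For every integer m ≥ 1, trace(A_m^m) = 2^m − 1. -/

import Mathlib

/-- The Polynacci matrix `A_m`: first column all ones, first superdiagonal all ones,
all other entries zero (0-indexed). -/
def polyA (m : ℕ) : Matrix (Fin m) (Fin m) ℤ :=
  Matrix.of fun i j => if j.val = 0 then 1 else if j.val = i.val + 1 then 1 else 0

/-!
`A_m` sends `e₀` to the all-ones vector and `e_{j+1}` to `e_j`, so `A^{i+1} eᵢ = 𝟙`. On the
other hand `(A v)ᵢ = v₀ + v_{i+1}` away from the last row, so `(A^ℓ 𝟙)ᵢ = 2^ℓ` as long as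
`i + ℓ < m`. Hence the `i`-th diagonal entry of `A^m` is `2^(m-1-i)`, and the trace is a
geometric sum.
-/

section

open Matrix

variable {m : ℕ}

lemma polyA_row (i : Fin m) (h : i.val + 1 < m) :
    polyA m i = Pi.single ⟨0, i.pos⟩ 1 + Pi.single ⟨i.val + 1, h⟩ 1 := by
  funext j
  simp only [polyA, of_apply, Pi.add_apply, Pi.single_apply, Fin.ext_iff]
  split_ifs <;> omega

lemma polyA_mulVec_apply (v : Fin m → ℤ) (i : Fin m) (h : i.val + 1 < m) :
    (polyA m *ᵥ v) i = v ⟨0, i.pos⟩ + v ⟨i.val + 1, h⟩ := by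
  rw [mulVec, polyA_row i h, add_dotProduct, single_one_dotProduct,
    single_one_dotProduct]

lemma polyA_mulVec_single_of_val_eq_zero (j : Fin m) (hj : j.val = 0) :
    polyA m *ᵥ Pi.single j 1 = 1 := by
  funext i
  simp [polyA, hj]

lemma polyA_mulVec_single_of_val_eq_succ (i j : Fin m) (h : j.val = i.val + 1) :
    polyA m *ᵥ Pi.single j 1 = Pi.single i 1 := by
  funext k
  simp only [mulVec_single_one, col_apply, polyA, of_apply, Pi.single_apply,
    Fin.ext_iff]
  split_ifs <;> omega

lemma polyA_pow_mulVec_single_of_val_eq_add (k : ℕ) (i j : Fin m) (h : j.val = i.val + k) :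
    polyA m ^ k *ᵥ Pi.single j 1 = Pi.single i 1 := by
  induction k generalizing j with
  | zero =>
    obtain rfl : j = i := Fin.ext h
    rw [pow_zero, one_mulVec]
  | succ k ih =>
    have hj : j.val - 1 < m := by omega
    rw [pow_succ, ← mulVec_mulVec,
      polyA_mulVec_single_of_val_eq_succ ⟨j.val - 1, hj⟩ j (by simp only; omega),
      ih _ (by simp only; omega)]

lemma polyA_pow_succ_mulVec_single (i : Fin m) :
    polyA m ^ (i.val + 1) *ᵥ Pi.single i 1 = 1 := by
  rw [pow_succ', ← mulVec_mulVec,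
    polyA_pow_mulVec_single_of_val_eq_add i.val ⟨0, i.pos⟩ i (zero_add _).symm,
    polyA_mulVec_single_of_val_eq_zero _ rfl]

lemma polyA_pow_mulVec_one_apply (ℓ : ℕ) (i : Fin m) (h : i.val + ℓ < m) :
    (polyA m ^ ℓ *ᵥ 1) i = 2 ^ ℓ := by
  induction ℓ generalizing i with
  | zero => simp
  | succ ℓ ih =>
    rw [pow_succ', ← mulVec_mulVec, polyA_mulVec_apply _ i (by omega),
      ih _ (by simp only; omega), ih _ (by simp only; omega), pow_succ, mul_two]

lemma polyA_pow_apply_self (ℓ : ℕ) (i : Fin m) (h : i.val + ℓ < m) :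
    (polyA m ^ (ℓ + (i.val + 1))) i i = 2 ^ ℓ := by
  rw [← polyA_pow_mulVec_one_apply ℓ i h, ← polyA_pow_succ_mulVec_single i,
    mulVec_mulVec, ← pow_add, mulVec_single_one, col_apply]

end

theorem polyA_trace_pow_self_general (m : ℕ) :
    ((polyA m) ^ m).trace = 2 ^ m - 1 := by
  have hdiag (i : Fin m) : (polyA m ^ m) i i = 2 ^ (m - 1 - i.val) := by
    rw [show polyA m ^ m = polyA m ^ ((m - 1 - i.val) + (i.val + 1)) by congr 1; omega]
    exact polyA_pow_apply_self _ i (by omega)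
  calc ((polyA m) ^ m).trace
      = ∑ i : Fin m, (2 : ℤ) ^ (m - 1 - i.val) := Finset.sum_congr rfl fun i _ => hdiag i
    _ = ∑ k ∈ Finset.range m, (2 : ℤ) ^ k := by
      rw [Fin.sum_univ_eq_sum_range (fun k => (2 : ℤ) ^ (m - 1 - k)), Finset.sum_range_reflect]
    _ = 2 ^ m - 1 := by simpa using geom_sum_mul (2 : ℤ) m

theorem polyA_trace_pow_self (m : ℕ) (hm : 1 ≤ m) :
    ((polyA m) ^ m).trace = 2 ^ m - 1 :=
  polyA_trace_pow_self_general m
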